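/- For every θ ∈ (0,1), the quantity 1 − (1 − β + α e^{−2πiθ}) d_θ (1 − e^{−2πiθ})^{-1} has modulus at least 1; in particular it is bounded away from zero uniformly in θ on any interval [δ, 1−δ] with 0 < δ < 1/2. -/

import Mathlib

open Real Set

noncomputable section

/-- `d_θ = (β − α)(1 − e^{−2πiθ})⁻¹(α + (1 − β)e^{−2πiθ})`. -/
def dTheta (α β θ : ℝ) : ℂ :=
  ((β : ℂ) - α) * (1 - Complex.exp (-(2 * Real.pi * Complex.I * θ)))⁻¹ *
    ((α : ℂ) + (1 - β) * Complex.exp (-(2 * Real.pi * Complex.I * θ)))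

/-!
Write `z = e^{−2πiθ}`, so `|z| = 1` and `z̄ = z⁻¹`. Then `1 − β + αz = z · conj(α + (1 − β)z)` and
`(1 − z)² = −z |1 − z|²`, so the quantity equals `1 + (β − α)|α + (1 − β)z|² / |1 − z|²`, a real
number that is at least `1`.
-/

namespace Complex

open ComplexConjugate

variable {z : ℂ}

theorem add_mul_eq_mul_conj_of_norm_eq_one (hz : ‖z‖ = 1) (a b : ℝ) :
    b + a * z = z * conj (a + b * z) := by
  have hzz : z * conj z = 1 := by rw [mul_conj', hz]; norm_num
  simp only [map_add, map_mul, conj_ofReal]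
  linear_combination -(b : ℂ) * hzz

theorem one_sub_sq_of_norm_eq_one (hz : ‖z‖ = 1) : (1 - z) ^ 2 = -z * (‖1 - z‖ : ℂ) ^ 2 := by
  have hzz : z * conj z = 1 := by rw [mul_conj', hz]; norm_num
  rw [← mul_conj', map_sub, map_one]
  linear_combination (z - 1) * hzz

theorem mul_div_one_sub_sq_of_norm_eq_one (hz : ‖z‖ = 1) (a b : ℝ) :
    (b + a * z) * (a + b * z) / (1 - z) ^ 2 = -((‖a + b * z‖ : ℂ) ^ 2 / (‖1 - z‖ : ℂ) ^ 2) := by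
  have hz0 : z ≠ 0 := norm_ne_zero_iff.mp (by rw [hz]; exact one_ne_zero)
  rw [add_mul_eq_mul_conj_of_norm_eq_one hz, one_sub_sq_of_norm_eq_one hz, mul_assoc,
    conj_mul', neg_mul, div_neg, mul_div_mul_left _ _ hz0]

end Complex

theorem stmt_9_general (α β : ℝ) (hαβ : α < β) (θ : ℝ) :
    1 ≤ ‖(1 : ℂ) - ((1 : ℂ) - β + α * Complex.exp (-(2 * Real.pi * Complex.I * θ))) *
        dTheta α β θ * (1 - Complex.exp (-(2 * Real.pi * Complex.I * θ)))⁻¹‖ := by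
  set z := Complex.exp (-(2 * Real.pi * Complex.I * θ)) with hz_def
  have hz : ‖z‖ = 1 := by simp [z, Complex.norm_exp]
  have hreal : (1 : ℂ) - (1 - β + α * z) * dTheta α β θ * (1 - z)⁻¹ =
      ((1 + (β - α) * (‖α + (1 - β) * z‖ ^ 2 / ‖1 - z‖ ^ 2) : ℝ) : ℂ) := by
    have hratio := Complex.mul_div_one_sub_sq_of_norm_eq_one hz α (1 - β)
    rw [div_eq_mul_inv, ← inv_pow] at hratio
    push_cast at hratio ⊢
    rw [dTheta, ← hz_def]
    linear_combination (-((β : ℂ) - α)) * hratio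
  rw [hreal, Complex.norm_real, Real.norm_eq_abs]
  have hβα : 0 ≤ β - α := sub_nonneg.mpr hαβ.le
  exact le_abs.mpr (Or.inl (le_add_of_nonneg_right (by positivity)))

theorem stmt_9 (α β : ℝ) (hα : 0 < α) (hαβ : α < β) (hβ : β < 1)
    (θ : ℝ) (hθ : θ ∈ Ioo (0:ℝ) 1) :
    1 ≤ ‖(1 : ℂ) - ((1 : ℂ) - β + α * Complex.exp (-(2 * Real.pi * Complex.I * θ))) *
        dTheta α β θ * (1 - Complex.exp (-(2 * Real.pi * Complex.I * θ)))⁻¹‖ :=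
  stmt_9_general α β hαβ θ

end
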